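/- arXiv:2509.01865 — 4 statements merged into one kernel-verified Lean document; each statement's English description precedes it below -/
import Mathlib

section
/- Let G be an elementary abelian 2-group of rank n and M a {1,-1}-matrix indexed by G such that for all x, y, z ∈ G with x ≠ y, M_{x,xz} M_{x,yz} M_{y,xz} M_{y,yz} = -1. Then the bilinear forms f_c = Σ_{g ∈ G} M_{g,gc} x_g y_{gc} (c ∈ G) satisfy the composition identity (Σ_{g∈G} x_g²)(Σ_{h∈G} y_h²) = Σ_{c∈G} f_c² in the polynomial ring ℝ[x_g, y_g : g ∈ G]. -/
open MvPolynomial Finset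

lemma sign_cancel_aux (a b c d : ℝ)
    (ha : a = 1 ∨ a = -1) (hb : b = 1 ∨ b = -1)
    (hc : c = 1 ∨ c = -1) (hd : d = 1 ∨ d = -1)
    (h : a * b * c * d = -1) : a * d + b * c = 0 := by
  rcases ha with rfl | rfl <;> rcases hb with rfl | rfl <;>
    rcases hc with rfl | rfl <;> rcases hd with rfl | rfl <;> norm_num at h <;> norm_num

/-- For a `{1,-1}`-matrix `M` indexed by an elementary abelian 2-group of
rank `n` satisfying the quadruple sign condition, the bilinear forms
`f_c = Σ_g M(g, g+c) x_g y_{g+c}` compose the sum of squares identity. -/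
theorem sign_matrix_composition_identity (n : ℕ)
    (M : (Fin n → ZMod 2) → (Fin n → ZMod 2) → ℝ)
    (hM : ∀ x y, M x y = 1 ∨ M x y = -1)
    (hcond : ∀ x y z : Fin n → ZMod 2, x ≠ y →
      M x (x + z) * M x (y + z) * M y (x + z) * M y (y + z) = -1) :
    (∑ g : Fin n → ZMod 2,
        (X (Sum.inl g) : MvPolynomial ((Fin n → ZMod 2) ⊕ (Fin n → ZMod 2)) ℝ) ^ 2)
      * (∑ h : Fin n → ZMod 2, (X (Sum.inr h)) ^ 2)
      = ∑ c : Fin n → ZMod 2,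
          (∑ g : Fin n → ZMod 2, C (M g (g + c)) * X (Sum.inl g) * X (Sum.inr (g + c))) ^ 2 := by
  classical
  have hself : ∀ a : Fin n → ZMod 2, a + a = 0 := by
    intro a; funext i
    have h2 : ∀ x : ZMod 2, x + x = 0 := by decide
    exact h2 (a i)
  set t : (Fin n → ZMod 2) → (Fin n → ZMod 2) → MvPolynomial ((Fin n → ZMod 2) ⊕ (Fin n → ZMod 2)) ℝ :=
    fun g c => C (M g (g + c)) * X (Sum.inl g) * X (Sum.inr (g + c)) with ht
  -- off-diagonal cancellation (for fixed g ≠ g', summing over c gives 0)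
  have offdiag : ∀ g g' : Fin n → ZMod 2, g' ≠ g →
      ∑ c : Fin n → ZMod 2, t g c * t g' c = 0 := by
    intro g g' hne
    apply Finset.sum_ninvolution (fun c => g + g' + c)
    · intro c
      have e1 : g + (g + g' + c) = g' + c := by
        rw [show g + (g + g' + c) = (g + g) + (g' + c) by ring, hself, zero_add]
      have e2 : g' + (g + g' + c) = g + c := by
        rw [show g' + (g + g' + c) = (g' + g') + (g + c) by ring, hself, zero_add]
      have hz : M g (g + c) * M g' (g' + c) + M g (g' + c) * M g' (g + c) = 0 :=
        sign_cancel_aux _ _ _ _ (hM g (g + c)) (hM g (g' + c)) (hM g' (g + c))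
          (hM g' (g' + c)) (hcond g g' c hne.symm)
      have hz' : (C (M g (g + c)) * C (M g' (g' + c))
          + C (M g (g' + c)) * C (M g' (g + c)) :
          MvPolynomial ((Fin n → ZMod 2) ⊕ (Fin n → ZMod 2)) ℝ) = 0 := by
        rw [← map_mul, ← map_mul, ← map_add, hz, map_zero]
      simp only [ht, e1, e2]
      linear_combination (X (Sum.inl g) * X (Sum.inl g') * X (Sum.inr (g + c))
        * X (Sum.inr (g' + c)) : MvPolynomial ((Fin n → ZMod 2) ⊕ (Fin n → ZMod 2)) ℝ) * hz'
    · intro c _ hcc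
      apply hne
      have h0 : g + g' = 0 := by
        have := congrArg (· + c) hcc
        simpa [show g + g' + c + c = g + g' by
          rw [show g + g' + c + c = (g + g') + (c + c) by ring, hself, add_zero],
          hself] using this
      have := congrArg (· + g) h0
      simpa [show g + g' + g = g' by
        rw [show g + g' + g = (g + g) + g' by ring, hself, zero_add]] using this
    · intro c; exact mem_univ _
    · intro c
      rw [show g + g' + (g + g' + c) = (g + g) + ((g' + g') + c) by ring, hself, hself,
        zero_add, zero_add]
  -- diagonal part
  have diag : ∀ g : Fin n → ZMod 2, ∑ c : Fin n → ZMod 2, t g c * t g c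
      = X (Sum.inl g) ^ 2 * ∑ h : Fin n → ZMod 2,
          (X (Sum.inr h) : MvPolynomial ((Fin n → ZMod 2) ⊕ (Fin n → ZMod 2)) ℝ) ^ 2 := by
    intro g
    rw [Finset.mul_sum]
    apply Fintype.sum_equiv (Equiv.addLeft g)
    intro c
    have hM2 : (C (M g (g + c)) * C (M g (g + c)) :
        MvPolynomial ((Fin n → ZMod 2) ⊕ (Fin n → ZMod 2)) ℝ) = 1 := by
      rw [← map_mul]
      rcases hM g (g + c) with h | h <;> rw [h] <;> norm_num
    simp only [ht, Equiv.coe_addLeft]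
    linear_combination (X (Sum.inl g) ^ 2 * X (Sum.inr (g + c)) ^ 2 :
      MvPolynomial ((Fin n → ZMod 2) ⊕ (Fin n → ZMod 2)) ℝ) * hM2
  have key : ∑ c : Fin n → ZMod 2, (∑ g : Fin n → ZMod 2, t g c) ^ 2
      = ∑ c : Fin n → ZMod 2, ∑ g : Fin n → ZMod 2, t g c * t g c := by
    have h1 : ∀ c : Fin n → ZMod 2, (∑ g : Fin n → ZMod 2, t g c) ^ 2
        = ∑ g : Fin n → ZMod 2, ∑ g' : Fin n → ZMod 2, t g c * t g' c := fun c => by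
      rw [sq, Finset.sum_mul_sum]
    have h2 : ∀ (c g : Fin n → ZMod 2), ∑ g' : Fin n → ZMod 2, t g c * t g' c
        = t g c * t g c + ∑ g' ∈ Finset.univ.erase g, t g c * t g' c := fun c g =>
      (Finset.add_sum_erase _ _ (mem_univ g)).symm
    simp only [h1, h2, Finset.sum_add_distrib]
    have h3 : ∑ c : Fin n → ZMod 2, ∑ g : Fin n → ZMod 2,
        ∑ g' ∈ Finset.univ.erase g, t g c * t g' c = 0 := by
      rw [Finset.sum_comm]
      refine Finset.sum_eq_zero fun g _ => ?_
      rw [Finset.sum_comm]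
      exact Finset.sum_eq_zero fun g' hg' => offdiag g g' (Finset.ne_of_mem_erase hg')
    rw [h3, add_zero]
  calc (∑ g : Fin n → ZMod 2,
        (X (Sum.inl g) : MvPolynomial ((Fin n → ZMod 2) ⊕ (Fin n → ZMod 2)) ℝ) ^ 2)
      * (∑ h : Fin n → ZMod 2, (X (Sum.inr h)) ^ 2)
      = ∑ g : Fin n → ZMod 2, ∑ c : Fin n → ZMod 2, t g c * t g c := by
        rw [Finset.sum_mul]
        exact Finset.sum_congr rfl fun g _ => (diag g).symm
    _ = ∑ c : Fin n → ZMod 2, ∑ g : Fin n → ZMod 2, t g c * t g c := Finset.sum_comm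
    _ = ∑ c : Fin n → ZMod 2, (∑ g : Fin n → ZMod 2, t g c) ^ 2 := key.symm
    _ = ∑ c : Fin n → ZMod 2,
          (∑ g : Fin n → ZMod 2, C (M g (g + c)) * X (Sum.inl g) * X (Sum.inr (g + c))) ^ 2 := by
        simp only [ht]
end

section
/- Let G be an elementary abelian 2-group of rank n (with 2^n elements) and suppose there exists a {1,-1}-matrix M indexed by G such that for all x, y, z ∈ G with x ≠ y, M_{x,xz} M_{x,yz} M_{y,xz} M_{y,yz} = -1. Then 2^n ∈ {1, 2, 4, 8}, i.e., n ≤ 3. -/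
open Matrix
namespace SignAux
variable {m : ℕ} {α : Type*} [Fintype α] [DecidableEq α]
def PB (B : Fin m → Matrix α α ℝ) (l : List (Fin m)) : Matrix α α ℝ := (l.map B).prod
@[simp] lemma PB_nil (B : Fin m → Matrix α α ℝ) : PB B [] = 1 := rfl
@[simp] lemma PB_cons (B : Fin m → Matrix α α ℝ) (i : Fin m) (l : List (Fin m)) :
    PB B (i :: l) = B i * PB B l := rfl
lemma PB_append (B : Fin m → Matrix α α ℝ) (l l' : List (Fin m)) :
    PB B (l ++ l') = PB B l * PB B l' := by simp [PB]
variable {B : Fin m → Matrix α α ℝ}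
lemma move (hac : ∀ i j : Fin m, i ≠ j → B i * B j = -(B j * B i))
    (i : Fin m) (l : List (Fin m)) (hi : i ∉ l) :
    B i * PB B l = (-1 : ℝ) ^ l.length • (PB B l * B i) := by
  induction l with
  | nil => simp
  | cons j t ih =>
    have hij : i ≠ j := fun h => hi (h ▸ List.mem_cons_self)
    have hit : i ∉ t := fun h => hi (List.mem_cons_of_mem _ h)
    calc B i * PB B (j :: t) = (B i * B j) * PB B t := by rw [PB_cons, mul_assoc]
      _ = -(B j * (B i * PB B t)) := by rw [hac i j hij]; simp [mul_assoc]
      _ = -(B j * ((-1 : ℝ) ^ t.length • (PB B t * B i))) := by rw [ih hit]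
      _ = (-1 : ℝ) ^ (j :: t).length • (PB B (j :: t) * B i) := by
          simp [mul_smul_comm, pow_succ, mul_assoc]

lemma insert_norm (hsq : ∀ i, B i * B i = -1)
    (hac : ∀ i j : Fin m, i ≠ j → B i * B j = -(B j * B i))
    (i : Fin m) (d : List (Fin m)) (hd : d.Nodup) :
    ∃ (σ : ℝ) (d' : List (Fin m)), (σ = 1 ∨ σ = -1) ∧ d'.Nodup ∧
      PB B (i :: d) = σ • PB B d' ∧
      (∀ j, j ∈ d' ↔ ((j ∈ d ∧ j ≠ i) ∨ (j ∉ d ∧ j = i))) ∧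
      (d'.length + d.length + 1) % 2 = 0 := by
  induction d with
  | nil =>
    refine ⟨1, [i], Or.inl rfl, by simp, by simp, ?_, by simp⟩
    intro j; simp
  | cons j t ih =>
    have hjt : j ∉ t := (List.nodup_cons.mp hd).1
    have ht : t.Nodup := (List.nodup_cons.mp hd).2
    by_cases hij : i = j
    · subst hij
      refine ⟨-1, t, Or.inr rfl, ht, ?_, ?_, by simp only [List.length_cons]; omega⟩
      · have : PB B (i :: i :: t) = (B i * B i) * PB B t := by simp [mul_assoc]
        rw [this, hsq i]; simp
      · intro j'
        constructor
        · intro hj'; exact Or.inl ⟨List.mem_cons_of_mem _ hj', fun h => hjt (h ▸ hj')⟩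
        · rintro (⟨hj', hne⟩ | ⟨hj', he⟩)
          · rcases List.mem_cons.mp hj' with h | h
            · exact absurd h hne
            · exact h
          · exact absurd (he ▸ List.mem_cons_self) hj'
    · obtain ⟨σ, d', hσ, hnd', heq, hmem, hpar⟩ := ih ht
      have hjd' : j ∉ d' := by
        intro h
        rcases (hmem j).mp h with ⟨h1, _⟩ | ⟨_, h2⟩
        · exact hjt h1
        · exact hij h2.symm
      refine ⟨-σ, j :: d', by rcases hσ with h | h <;> simp [h], List.nodup_cons.mpr ⟨hjd', hnd'⟩, ?_, ?_, by simp; omega⟩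
      · have : PB B (i :: j :: t) = (B i * B j) * PB B t := by simp [mul_assoc]
        rw [this, hac i j hij]
        have : -(B j * B i) * PB B t = -(B j * PB B (i :: t)) := by simp [mul_assoc]
        rw [this, heq]
        simp [mul_smul_comm]
      · intro j'
        by_cases hj'j : j' = j
        · constructor
          · intro _
            refine Or.inl ⟨by simp [hj'j], ?_⟩
            intro h; exact hij (by rw [← h, hj'j])
          · intro _; simp [hj'j]
        · simp only [List.mem_cons, hj'j, false_or, hmem j']

lemma norm (hsq : ∀ i, B i * B i = -1)
    (hac : ∀ i j : Fin m, i ≠ j → B i * B j = -(B j * B i))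
    (l : List (Fin m)) :
    ∃ (σ : ℝ) (d : List (Fin m)), (σ = 1 ∨ σ = -1) ∧ d.Nodup ∧
      PB B l = σ • PB B d ∧
      (∀ j, j ∈ d ↔ l.count j % 2 = 1) ∧
      (d.length + l.length) % 2 = 0 := by
  induction l with
  | nil => exact ⟨1, [], Or.inl rfl, by simp, by simp, by simp, by simp⟩
  | cons i t ih =>
    obtain ⟨σ, d, hσ, hd, heq, hmem, hpar⟩ := ih
    obtain ⟨σ', d', hσ', hnd', heq', hmem', hpar'⟩ := insert_norm hsq hac i d hd
    refine ⟨σ * σ', d', by rcases hσ with h|h <;> rcases hσ' with h'|h' <;> simp [h, h'],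
      hnd', ?_, ?_, by simp at hpar' ⊢; omega⟩
    · rw [PB_cons, heq, mul_smul_comm, ← PB_cons, heq', smul_smul]
    · intro j
      rw [hmem' j]
      by_cases hji : j = i
      · subst hji
        have : (j :: t).count j = t.count j + 1 := by simp [List.count_cons]
        rw [this]
        have hm := hmem j
        constructor
        · rintro (⟨_, h⟩ | ⟨h, _⟩)
          · exact absurd rfl h
          · have : ¬ t.count j % 2 = 1 := fun hh => h (hm.mpr hh)
            omega
        · intro h
          have : ¬ t.count j % 2 = 1 := by omega
          exact Or.inr ⟨fun hh => this (hm.mp hh), rfl⟩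
      · have : (i :: t).count j = t.count j := by simp [List.count_cons, hji, Ne.symm hji]
        rw [this, ← hmem j]
        constructor
        · rintro (⟨h, _⟩ | ⟨_, h⟩)
          · exact h
          · exact absurd h hji
        · intro h; exact Or.inl ⟨h, hji⟩

lemma trace_PB_zero (hac : ∀ i j : Fin m, i ≠ j → B i * B j = -(B j * B i))
    (d : List (Fin m)) (hd : d.Nodup) (hne : d ≠ []) (hev : d.length % 2 = 0) :
    trace (PB B d) = 0 := by
  obtain ⟨j, t, rfl⟩ : ∃ j t, d = j :: t := by
    cases d with
    | nil => exact absurd rfl hne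
    | cons j t => exact ⟨j, t, rfl⟩
  have hjt : j ∉ t := (List.nodup_cons.mp hd).1
  have hodd : (-1 : ℝ) ^ t.length = -1 := by
    apply Odd.neg_one_pow
    rw [Nat.odd_iff]
    simp only [List.length_cons] at hev
    omega
  have h1 : trace (B j * PB B t) = trace (PB B t * B j) := trace_mul_comm _ _
  have h2 : B j * PB B t = -(PB B t * B j) := by rw [move hac j t hjt, hodd]; simp
  rw [PB_cons]
  have := h1
  rw [h2] at this
  simp only [trace_neg] at this
  rw [h2, trace_neg]
  linarith
lemma PB_rev_mul (hsq : ∀ i, B i * B i = -1) (l : List (Fin m)) :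
    PB B l.reverse * PB B l = ((-1 : ℝ) ^ l.length) • 1 := by
  induction l with
  | nil => simp
  | cons i t ih =>
    have e1 : PB B ((i :: t).reverse) * PB B (i :: t)
        = PB B t.reverse * ((B i * B i) * PB B t) := by
      rw [List.reverse_cons, PB_append]
      simp [PB, mul_assoc]
    rw [e1, hsq i]
    have : PB B t.reverse * (-1 * PB B t) = -(PB B t.reverse * PB B t) := by
      simp [mul_assoc]
    rw [this, ih]
    simp [pow_succ]

lemma key {k : ℕ} [Nonempty α] (B : Fin (k+1) → Matrix α α ℝ)
    (hsq : ∀ i, B i * B i = -1)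
    (hac : ∀ i j, i ≠ j → B i * B j = -(B j * B i)) :
    2 ^ k ≤ Fintype.card α ^ 2 := by
  classical
  set N := Fintype.card α with hN
  set L : Finset (Fin (k+1)) → List (Fin (k+1)) := fun S => Finset.sort S (· ≤ ·) with hL
  -- counting in sorted lists
  have hcount : ∀ (S : Finset (Fin (k+1))) (j), (L S).count j = if j ∈ S then 1 else 0 := by
    intro S j
    by_cases h : j ∈ S
    · rw [if_pos h]
      exact List.count_eq_one_of_mem (Finset.sort_nodup _ _) ((Finset.mem_sort _).mpr h)
    · rw [if_neg h]
      exact List.count_eq_zero_of_not_mem (fun hh => h ((Finset.mem_sort _).mp hh))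
  have hcountrev : ∀ (S : Finset (Fin (k+1))) (j), (L S).reverse.count j = if j ∈ S then 1 else 0 := by
    intro S j
    by_cases h : j ∈ S
    · rw [if_pos h]
      exact List.count_eq_one_of_mem (List.nodup_reverse.mpr (Finset.sort_nodup _ _))
        (List.mem_reverse.mpr ((Finset.mem_sort _).mpr h))
    · rw [if_neg h]
      exact List.count_eq_zero_of_not_mem
        (fun hh => h ((Finset.mem_sort _).mp (List.mem_reverse.mp hh)))
  -- diagonal trace
  have hdiag : ∀ S : Finset (Fin (k+1)),
      trace (PB B (L S).reverse * PB B (L S)) = (-1 : ℝ) ^ S.card * N := by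
    intro S
    rw [PB_rev_mul hsq, trace_smul, trace_one, Finset.length_sort]
    simp [smul_eq_mul, hN]
  -- off-diagonal trace
  have hoff : ∀ S T : Finset (Fin (k+1)), Even S.card → Even T.card → S ≠ T →
      trace (PB B (L T).reverse * PB B (L S)) = 0 := by
    intro S T hS hT hST
    rw [← PB_append]
    obtain ⟨σ, d, hσ, hd, heq, hmem, hpar⟩ := norm hsq hac ((L T).reverse ++ L S)
    have hdne : d ≠ [] := by
      have : ∃ j, ¬ (j ∈ S ↔ j ∈ T) := by
        by_contra h
        push_neg at h
        exact hST (Finset.ext fun j => h j)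
      obtain ⟨j, hj⟩ := this
      have hc : ((L T).reverse ++ L S).count j % 2 = 1 := by
        rw [List.count_append, hcountrev, hcount]
        by_cases h1 : j ∈ S <;> by_cases h2 : j ∈ T <;> simp [h1, h2] at hj ⊢
      intro h
      have h2 := (hmem j).mpr hc
      rw [h] at h2
      simp at h2
    have hlen : d.length % 2 = 0 := by
      have h1 : ((L T).reverse ++ L S).length = T.card + S.card := by
        simp [hL, List.length_append, Finset.length_sort]
      rw [h1] at hpar
      rw [Nat.even_iff] at hS hT
      omega
    rw [heq, trace_smul, trace_PB_zero hac d hd hdne hlen]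
    simp
  -- even subsets injection
  have hlast : ∀ T : Finset (Fin k), Fin.last k ∉ T.map Fin.castSuccEmb := by
    intro T h
    obtain ⟨x, _, hx⟩ := Finset.mem_map.mp h
    exact (Fin.castSucc_lt_last x).ne hx
  set ι : Finset (Fin k) → Finset (Fin (k+1)) := fun T =>
    if Even T.card then T.map Fin.castSuccEmb
    else insert (Fin.last k) (T.map Fin.castSuccEmb) with hι
  have hιeven : ∀ T, Even (ι T).card := by
    intro T
    by_cases h : Even T.card
    · simpa [hι, h, Finset.card_map] using h
    · simp only [hι, if_neg h]
      rw [Finset.card_insert_of_notMem (hlast T), Finset.card_map]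
      rw [Nat.even_iff] at h ⊢
      omega
  have hιinj : Function.Injective ι := by
    intro T1 T2 h
    have hmapinj : Function.Injective (Finset.map (Fin.castSuccEmb (n := k))) :=
      fun a b hab => Finset.map_injective _ hab
    by_cases h1 : Even T1.card <;> by_cases h2 : Even T2.card
    · simp only [hι, if_pos h1, if_pos h2] at h
      exact hmapinj h
    · simp only [hι, if_pos h1, if_neg h2] at h
      exact absurd (h ▸ Finset.mem_insert_self _ _) (hlast T1)
    · simp only [hι, if_neg h1, if_pos h2] at h
      exact absurd (h.symm ▸ Finset.mem_insert_self _ _) (hlast T2)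
    · simp only [hι, if_neg h1, if_neg h2] at h
      apply hmapinj
      have := congrArg (Finset.erase · (Fin.last k)) h
      simpa [Finset.erase_insert (hlast T1), Finset.erase_insert (hlast T2)] using this
  -- linear independence
  set v : Finset (Fin k) → Matrix α α ℝ := fun T => PB B (L (ι T)) with hv
  have hNpos : 0 < N := Fintype.card_pos
  have hli : LinearIndependent ℝ v := by
    rw [Fintype.linearIndependent_iff]
    intro g hg T
    have h0 : trace (PB B (L (ι T)).reverse * (∑ T', g T' • v T')) = 0 := by
      rw [hg, mul_zero, trace_zero]
    rw [Finset.mul_sum] at h0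
    rw [trace_sum] at h0
    have h1 : ∀ T', trace (PB B (L (ι T)).reverse * (g T' • v T'))
        = g T' * trace (PB B (L (ι T)).reverse * v T') := by
      intro T'
      rw [mul_smul_comm, trace_smul, smul_eq_mul]
    simp only [h1] at h0
    have h2 : ∀ T' ∈ (Finset.univ : Finset (Finset (Fin k))), T' ≠ T →
        g T' * trace (PB B (L (ι T)).reverse * v T') = 0 := by
      intro T' _ hne
      rw [hv]
      rw [hoff (ι T') (ι T) (hιeven T') (hιeven T) (fun hh => hne (hιinj hh))]
      ring
    rw [Finset.sum_eq_single T h2 (by intro h; exact absurd (Finset.mem_univ T) h)] at h0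
    rw [hv] at h0
    rw [hdiag (ι T)] at h0
    have hne : (-1 : ℝ) ^ (ι T).card * N ≠ 0 := by
      apply mul_ne_zero (pow_ne_zero _ (by norm_num))
      exact_mod_cast hNpos.ne'
    exact (mul_eq_zero.mp h0).resolve_right hne
  have hcard := hli.fintype_card_le_finrank
  rw [Module.finrank_matrix] at hcard
  simp only [Module.finrank_self, mul_one, Fintype.card_finset, Fintype.card_fin] at hcard
  calc (2 : ℕ) ^ k ≤ N * N := hcard
    _ = N ^ 2 := (sq N).symm
end SignAux


lemma two_pow_lb (n : ℕ) (h : 4 ≤ n) : 2 * n + 3 ≤ 2 ^ n := by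
  induction n with
  | zero => omega
  | succ k ih =>
    rcases Nat.lt_or_ge k 4 with hk | hk
    · interval_cases k <;> simp_all <;> omega
    · have h1 := ih (by omega)
      have h2 : 2 ^ k ≥ 2 := by
        calc 2 ≤ 2 * k + 3 := by omega
          _ ≤ 2 ^ k := h1
      rw [pow_succ]
      omega

/-- If an elementary abelian 2-group of rank `n` carries a `{1,-1}`-matrix
satisfying the quadruple sign condition, then `2^n ∈ {1, 2, 4, 8}`. -/
theorem sign_matrix_order_le (n : ℕ)
    (hex : ∃ M : (Fin n → ZMod 2) → (Fin n → ZMod 2) → ℝ,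
      (∀ x y, M x y = 1 ∨ M x y = -1) ∧
      ∀ x y z : Fin n → ZMod 2, x ≠ y →
        M x (x + z) * M x (y + z) * M y (x + z) * M y (y + z) = -1) :
    2 ^ n = 1 ∨ 2 ^ n = 2 ∨ 2 ^ n = 4 ∨ 2 ^ n = 8 := by
  by_cases hn : n ≤ 3
  · interval_cases n <;> norm_num
  · exfalso
    push_neg at hn
    obtain ⟨M, hM1, hM2⟩ := hex
    have hMsq : ∀ x y, M x y * M x y = 1 := by
      intro x y; rcases hM1 x y with h | h <;> rw [h] <;> norm_num
    set v : (Fin n → ZMod 2) → (Fin n → ZMod 2) → ℝ := fun s w => M 0 w * M s w with hv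
    have hv1 : ∀ s w, v s w = 1 ∨ v s w = -1 := by
      intro s w
      rcases hM1 0 w with h | h <;> rcases hM1 s w with h' | h' <;>
        simp [hv, h, h']
    have hvsq : ∀ s w, v s w * v s w = 1 := by
      intro s w; rcases hv1 s w with h | h <;> rw [h] <;> norm_num
    have hself : ∀ w : Fin n → ZMod 2, w + w = 0 := by
      intro w; funext i; exact CharTwo.add_self_eq_zero _
    have hP1 : ∀ s w, s ≠ 0 → v s (s + w) = - v s w := by
      intro s w hs
      have h := hM2 0 s w (Ne.symm hs)
      rw [zero_add] at h
      have h2 : v s w * v s (s + w) = -1 := by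
        simp only [hv]; linear_combination h
      linear_combination (v s w) * h2 - (v s (s + w)) * hvsq s w
    have hP2 : ∀ s t w, s ≠ 0 → t ≠ 0 → s ≠ t →
        v s w * v t (w + s) = -(v t w * v s (w + t)) := by
      intro s t w hs ht hst
      have h := hM2 s t (s + w) hst
      have e1 : s + (s + w) = w := by rw [← add_assoc, hself, zero_add]
      rw [e1] at h
      have h2 : v s w * v s (t + (s + w)) * v t w * v t (t + (s + w)) = -1 := by
        simp only [hv]
        rcases hM1 0 w with ha | ha <;> rcases hM1 0 (t + (s + w)) with hb | hb <;>
          rw [ha, hb] <;> first | linear_combination h | linear_combination -h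
      have e2 : t + (s + w) = s + (w + t) := by abel
      have e3 : t + (s + w) = t + (w + s) := by abel
      have h3 : v s (t + (s + w)) = - v s (w + t) := by rw [e2]; exact hP1 s (w + t) hs
      have h4 : v t (t + (s + w)) = - v t (w + s) := by rw [e3]; exact hP1 t (w + s) ht
      rw [h3, h4] at h2
      rcases hv1 t w with h5 | h5 <;> rcases hv1 s (w + t) with h6 | h6 <;>
        rw [h5, h6] at h2 ⊢ <;>
        first
          | linear_combination h2
          | linear_combination -h2
    set A : (Fin n → ZMod 2) → Matrix (Fin n → ZMod 2) (Fin n → ZMod 2) ℝ :=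
      fun s => Matrix.of fun w u => if u = w + s then v s w else 0 with hA
    have hmul : ∀ s t, A s * A t
        = Matrix.of fun w u => if u = (w + s) + t then v s w * v t (w + s) else 0 := by
      intro s t
      ext w u
      rw [Matrix.mul_apply]
      simp only [hA, Matrix.of_apply]
      rw [Finset.sum_eq_single (w + s)]
      · simp [mul_ite]
      · intro x _ hx; rw [if_neg hx, zero_mul]
      · intro h; exact absurd (Finset.mem_univ _) h
    have hAsq : ∀ s, s ≠ 0 → A s * A s = -1 := by
      intro s hs
      rw [hmul]
      ext w u
      simp only [Matrix.of_apply, Matrix.neg_apply, Matrix.one_apply]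
      have e : (w + s) + s = w := by rw [add_assoc, hself, add_zero]
      rw [e]
      have h1 : v s (w + s) = - v s w := by rw [add_comm w s]; exact hP1 s w hs
      by_cases h : u = w
      · rw [if_pos h, if_pos h.symm, h1]
        linear_combination -hvsq s w
      · rw [if_neg h, if_neg (Ne.symm h)]
        simp
    have hAanti : ∀ s t, s ≠ 0 → t ≠ 0 → s ≠ t → A s * A t = -(A t * A s) := by
      intro s t hs ht hst
      rw [hmul, hmul]
      ext w u
      simp only [Matrix.of_apply, Matrix.neg_apply]
      have e : (w + t) + s = (w + s) + t := by abel
      rw [e]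
      by_cases h : u = (w + s) + t
      · rw [if_pos h, if_pos h]; exact hP2 s t w hs ht hst
      · rw [if_neg h, if_neg h]; ring
    have hcardG : Fintype.card (Fin n → ZMod 2) = 2 ^ n := by simp
    have hcard' : Fintype.card {g : Fin n → ZMod 2 // g ≠ 0} = 2 ^ n - 1 := by
      have := Fintype.card_subtype_compl (fun g : Fin n → ZMod 2 => g = 0)
      rw [Fintype.card_subtype_eq, hcardG] at this
      exact this
    obtain ⟨f⟩ : Nonempty (Fin (2 * n + 1 + 1) ↪ {g : Fin n → ZMod 2 // g ≠ 0}) := by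
      apply Function.Embedding.nonempty_of_card_le
      rw [Fintype.card_fin, hcard']
      have := two_pow_lb n (by omega)
      omega
    set B : Fin (2 * n + 1 + 1) → Matrix (Fin n → ZMod 2) (Fin n → ZMod 2) ℝ :=
      fun i => A (f i).1 with hB
    have hBsq : ∀ i, B i * B i = -1 := fun i => hAsq _ (f i).2
    have hBac : ∀ i j, i ≠ j → B i * B j = -(B j * B i) := by
      intro i j hij
      exact hAanti _ _ (f i).2 (f j).2
        (fun h => hij (f.injective (Subtype.ext h)))
    have hkey := SignAux.key B hBsq hBac
    rw [hcardG, ← pow_mul] at hkey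
    have hlt : (2 : ℕ) ^ (n * 2) < 2 ^ (2 * n + 1) :=
      Nat.pow_lt_pow_right (by norm_num) (by omega)
    omega
end

section
/- The spin factor ℝ ⊕_f V is formally real: if a, b ∈ ℝ ⊕_f V satisfy a*a + b*b = 0, then a = b = 0. -/
/-- The spin factor product on `ℝ ⊕ V` associated to a bilinear form `f`. -/
noncomputable def spinMul {V : Type*} [AddCommGroup V] [Module ℝ V]
    (f : V →ₗ[ℝ] V →ₗ[ℝ] ℝ) (a b : ℝ × V) : ℝ × V :=
  (a.1 * b.1 + f a.2 b.2, b.1 • a.2 + a.1 • b.2)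

/-- the spin factor `ℝ ⊕_f V` is formally real:
`a² + b² = 0` implies `a = b = 0`. -/
theorem spinFactor_formally_real {V : Type*} [AddCommGroup V] [Module ℝ V]
    (f : V →ₗ[ℝ] V →ₗ[ℝ] ℝ)
    (hsymm : ∀ x y, f x y = f y x)
    (hpos : ∀ x, x ≠ 0 → 0 < f x x)
    (a b : ℝ × V)
    (h : spinMul f a a + spinMul f b b = 0) :
    a = 0 ∧ b = 0 := by
  have hnn : ∀ x : V, 0 ≤ f x x := by
    intro x
    by_cases hx : x = 0
    · simp [hx]
    · exact (hpos x hx).le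
  have h1 : a.1 * a.1 + f a.2 a.2 + (b.1 * b.1 + f b.2 b.2) = 0 :=
    congrArg Prod.fst h
  have ha1 : a.1 = 0 := by nlinarith [hnn a.2, hnn b.2, sq_nonneg a.1, sq_nonneg b.1]
  have hb1 : b.1 = 0 := by nlinarith [hnn a.2, hnn b.2, sq_nonneg a.1, sq_nonneg b.1]
  have ha2 : a.2 = 0 := by
    by_contra hx
    nlinarith [hpos a.2 hx, hnn b.2, sq_nonneg a.1, sq_nonneg b.1]
  have hb2 : b.2 = 0 := by
    by_contra hx
    nlinarith [hpos b.2 hx, hnn a.2, sq_nonneg a.1, sq_nonneg b.1]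
  exact ⟨Prod.ext ha1 ha2, Prod.ext hb1 hb2⟩
end

section
/- With the construction above (σ and σ' matrices built from a valid sign matrix M on an elementary abelian 2-group G), the set S = {σ_{(1,1)}, σ'_{(1,1)}} ∪ {σ_{(1,t)} : 1 ≠ t ∈ G} ∪ {σ_{(h,t)}, σ'_{(h,t)} : t ∈ G} consists of symmetric {0,1}-matrices whose sum is the all-ones matrix of order 4|G|, and σ_{(1,1)} is the identity matrix. -/
open Matrix

/-- The `2 × 2` matrix `K₂ = J₂ - I₂`. -/
noncomputable def K2 : Matrix (Fin 2) (Fin 2) ℝ := !![0, 1; 1, 0]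

open Classical in
/-- The `2 × 2` block `L_{x,y}` of the paper: `I₂` if `s = 1, t = 1`; `J₂` if
`s = 1, t ≠ 1`; `I₂` if `s ≠ 1` and `M_{x,y} = 1`; `K₂` if `s ≠ 1` and `M_{x,y} = -1`.
(The groups are written additively, so the identities are `0`.) -/
noncomputable def Lmat {n : ℕ} (M : (Fin n → ZMod 2) → (Fin n → ZMod 2) → ℝ)
    (s : ZMod 2) (t : Fin n → ZMod 2) (x y : Fin n → ZMod 2) :
    Matrix (Fin 2) (Fin 2) ℝ :=
  if s = 0 then (if t = 0 then 1 else fun _ _ => (1 : ℝ))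
  else (if M x y = 1 then 1 else K2)

open Classical in
/-- The matrix `σ_{(s,t)} = Σ_g E_{(1,g),(s,g+t)} ⊗ L_{g,g+t} + Σ_g E_{(h,g),(h+s,g+t)} ⊗ L_{g+t,g}`
of order `4·2ⁿ`, with rows and columns indexed by `(C₂ × G) × Fin 2`. -/
noncomputable def sigmaMat {n : ℕ} (M : (Fin n → ZMod 2) → (Fin n → ZMod 2) → ℝ)
    (s : ZMod 2) (t : Fin n → ZMod 2) :
    Matrix ((ZMod 2 × (Fin n → ZMod 2)) × Fin 2) ((ZMod 2 × (Fin n → ZMod 2)) × Fin 2) ℝ :=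
  fun p q =>
    if p.1.1 = 0 ∧ q.1.1 = s ∧ q.1.2 = p.1.2 + t then
      Lmat M s t p.1.2 (p.1.2 + t) p.2 q.2
    else if p.1.1 = 1 ∧ q.1.1 = 1 + s ∧ q.1.2 = p.1.2 + t then
      Lmat M s t (p.1.2 + t) p.1.2 p.2 q.2
    else 0

open Classical in
/-- The matrix `σ'_{(s,t)}`, obtained from `σ_{(s,t)}` by replacing each block `L` by `L·K₂`. -/
noncomputable def sigmaMat' {n : ℕ} (M : (Fin n → ZMod 2) → (Fin n → ZMod 2) → ℝ)
    (s : ZMod 2) (t : Fin n → ZMod 2) :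
    Matrix ((ZMod 2 × (Fin n → ZMod 2)) × Fin 2) ((ZMod 2 × (Fin n → ZMod 2)) × Fin 2) ℝ :=
  fun p q =>
    if p.1.1 = 0 ∧ q.1.1 = s ∧ q.1.2 = p.1.2 + t then
      (Lmat M s t p.1.2 (p.1.2 + t) * K2) p.2 q.2
    else if p.1.1 = 1 ∧ q.1.1 = 1 + s ∧ q.1.2 = p.1.2 + t then
      (Lmat M s t (p.1.2 + t) p.1.2 * K2) p.2 q.2
    else 0

namespace SigmaAux
variable {n : ℕ}

lemma zmod2 (a : ZMod 2) : a = 0 ∨ a = 1 := by revert a; decide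

lemma addSelf (g k : Fin n → ZMod 2) : g + (g + k) = k := by
  funext i
  have h : ∀ a b : ZMod 2, a + (a + b) = b := by decide
  exact h _ _

lemma selfAdd (g : Fin n → ZMod 2) : g + g = 0 := by
  funext i
  have h : ∀ a : ZMod 2, a + a = 0 := by decide
  simp only [Pi.add_apply, Pi.zero_apply]
  exact h _

lemma addAddSelf (g t : Fin n → ZMod 2) : (g + t) + t = g := by
  rw [add_assoc, selfAdd, add_zero]

lemma eqAdd (g k t : Fin n → ZMod 2) : k = g + t ↔ t = g + k := by
  constructor <;> rintro rfl <;> exact (addSelf _ _).symm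

lemma addEqZero (g k : Fin n → ZMod 2) : g + k = 0 ↔ g = k := by
  constructor
  · intro h
    have h2 := addSelf g k
    rw [h, add_zero] at h2
    exact h2
  · rintro rfl; exact selfAdd g

lemma K2K2 : K2 * K2 = 1 := by
  ext i j
  fin_cases i <;> fin_cases j <;>
    simp [K2, Matrix.mul_apply, Fin.sum_univ_two, Matrix.one_apply]

lemma entry01 (A : Matrix (Fin 2) (Fin 2) ℝ)
    (h : A = 1 ∨ A = (fun _ _ => (1:ℝ)) ∨ A = K2) (i j : Fin 2) :
    A i j = 0 ∨ A i j = 1 := by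
  rcases h with rfl | rfl | rfl <;> fin_cases i <;> fin_cases j <;>
    simp [K2, Matrix.one_apply]

lemma entrySymm (A : Matrix (Fin 2) (Fin 2) ℝ)
    (h : A = 1 ∨ A = (fun _ _ => (1:ℝ)) ∨ A = K2) (i j : Fin 2) :
    A i j = A j i := by
  rcases h with rfl | rfl | rfl <;> fin_cases i <;> fin_cases j <;>
    simp [K2, Matrix.one_apply]

lemma addJ (A : Matrix (Fin 2) (Fin 2) ℝ) (h : A = 1 ∨ A = K2) (i j : Fin 2) :
    A i j + (A * K2) i j = 1 := by
  rcases h with rfl | rfl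
  · rw [one_mul]; fin_cases i <;> fin_cases j <;> simp [K2, Matrix.one_apply]
  · rw [K2K2]; fin_cases i <;> fin_cases j <;> simp [K2, Matrix.one_apply]

lemma entrySymmK (A : Matrix (Fin 2) (Fin 2) ℝ)
    (h : A = 1 ∨ A = (fun _ _ => (1:ℝ)) ∨ A = K2) (i j : Fin 2) :
    (A * K2) i j = (A * K2) j i := by
  rcases h with rfl | rfl | rfl <;> fin_cases i <;> fin_cases j <;>
    simp [K2, Matrix.mul_apply, Fin.sum_univ_two, Matrix.one_apply] <;>
    (erw [Matrix.mul_apply, Matrix.mul_apply]; simp [Fin.sum_univ_two])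

lemma entry01K (A : Matrix (Fin 2) (Fin 2) ℝ)
    (h : A = 1 ∨ A = (fun _ _ => (1:ℝ)) ∨ A = K2) (i j : Fin 2) :
    (A * K2) i j = 0 ∨ (A * K2) i j = 1 := by
  rcases h with rfl | rfl | rfl <;> fin_cases i <;> fin_cases j <;>
    simp [K2, Matrix.mul_apply, Fin.sum_univ_two, Matrix.one_apply] <;>
    (erw [Matrix.mul_apply]; simp [Fin.sum_univ_two])

end SigmaAux


namespace SigmaAux
variable {n : ℕ}

lemma Lmat_mem (M : (Fin n → ZMod 2) → (Fin n → ZMod 2) → ℝ) (s : ZMod 2)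
    (t x y : Fin n → ZMod 2) :
    Lmat M s t x y = 1 ∨ Lmat M s t x y = (fun _ _ => (1:ℝ)) ∨ Lmat M s t x y = K2 := by
  unfold Lmat; split_ifs <;> simp [*] <;> exact Or.inr (Or.inl rfl)

lemma Lmat_one (M : (Fin n → ZMod 2) → (Fin n → ZMod 2) → ℝ)
    (t x y : Fin n → ZMod 2) : Lmat M 1 t x y = 1 ∨ Lmat M 1 t x y = K2 := by
  unfold Lmat
  rw [if_neg (by decide : ¬ (1:ZMod 2) = 0)]
  split_ifs <;> tauto

lemma Lmat_zero (M : (Fin n → ZMod 2) → (Fin n → ZMod 2) → ℝ)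
    (t x y x' y' : Fin n → ZMod 2) : Lmat M 0 t x y = Lmat M 0 t x' y' := by
  unfold Lmat; rw [if_pos rfl, if_pos rfl]

end SigmaAux

/-- the set
`S = {σ_{(1,1)}, σ'_{(1,1)}} ∪ {σ_{(1,t)} : t ≠ 1} ∪ {σ_{(h,t)}, σ'_{(h,t)} : t ∈ G}`
consists of symmetric {0,1}-matrices summing to the all-ones matrix of order 4|G|,
and `σ_{(1,1)}` is the identity matrix. -/
theorem sigma_family_is_partition (n : ℕ)
    (M : (Fin n → ZMod 2) → (Fin n → ZMod 2) → ℝ)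
    (hM : ∀ x y, M x y = 1 ∨ M x y = -1)
    (hcond : ∀ x y z : Fin n → ZMod 2, x ≠ y →
      M x (x + z) * M x (y + z) * M y (x + z) * M y (y + z) = -1) :
    sigmaMat M 0 0 = 1 ∧
    (∀ t, (sigmaMat M 0 t)ᵀ = sigmaMat M 0 t) ∧
    (sigmaMat' M 0 0)ᵀ = sigmaMat' M 0 0 ∧
    (∀ t, (sigmaMat M 1 t)ᵀ = sigmaMat M 1 t ∧ (sigmaMat' M 1 t)ᵀ = sigmaMat' M 1 t) ∧
    (∀ t p q, sigmaMat M 0 t p q = 0 ∨ sigmaMat M 0 t p q = 1) ∧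
    (∀ p q, sigmaMat' M 0 0 p q = 0 ∨ sigmaMat' M 0 0 p q = 1) ∧
    (∀ t p q, (sigmaMat M 1 t p q = 0 ∨ sigmaMat M 1 t p q = 1) ∧
      (sigmaMat' M 1 t p q = 0 ∨ sigmaMat' M 1 t p q = 1)) ∧
    (sigmaMat M 0 0 + sigmaMat' M 0 0
        + ∑ t ∈ Finset.univ.filter (fun t : Fin n → ZMod 2 => t ≠ 0), sigmaMat M 0 t
        + ∑ t : Fin n → ZMod 2, (sigmaMat M 1 t + sigmaMat' M 1 t))
      = fun _ _ => 1 := by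
  classical
  have z01 : ¬ (0:ZMod 2) = 1 := by decide
  have z10 : ¬ (1:ZMod 2) = 0 := by decide
  have z11 : (1:ZMod 2) + 1 = 0 := by decide
  have part1 : sigmaMat M 0 0 = 1 := by
    ext ⟨⟨a, g⟩, i⟩ ⟨⟨b, k⟩, j⟩
    unfold sigmaMat Lmat
    rcases SigmaAux.zmod2 a with rfl | rfl <;> rcases SigmaAux.zmod2 b with rfl | rfl <;>
      simp [Matrix.one_apply, Prod.ext_iff, z01, z10, add_zero] <;>
        split_ifs <;> simp_all [Matrix.one_apply]
  have symm0 : ∀ t, (sigmaMat M 0 t)ᵀ = sigmaMat M 0 t := by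
    intro t
    ext ⟨⟨a, g⟩, i⟩ ⟨⟨b, k⟩, j⟩
    show sigmaMat M 0 t ((b,k),j) ((a,g),i) = sigmaMat M 0 t ((a,g),i) ((b,k),j)
    have hc : (g = k + t) ↔ (k = g + t) := by
      constructor <;> intro h <;> rw [h, SigmaAux.addAddSelf]
    unfold sigmaMat
    simp only
    rcases SigmaAux.zmod2 a with rfl | rfl <;> rcases SigmaAux.zmod2 b with rfl | rfl <;>
      by_cases hk : k = g + t <;>
        simp [hc, hk, z01, z10, SigmaAux.addAddSelf] <;>
      first
      | rfl
      | (rw [SigmaAux.Lmat_zero M t _ _ g (g + t)]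
         exact SigmaAux.entrySymm _ (SigmaAux.Lmat_mem M 0 t g (g+t)) j i)
  have symm0' : (sigmaMat' M 0 0)ᵀ = sigmaMat' M 0 0 := by
    ext ⟨⟨a, g⟩, i⟩ ⟨⟨b, k⟩, j⟩
    show sigmaMat' M 0 0 ((b,k),j) ((a,g),i) = sigmaMat' M 0 0 ((a,g),i) ((b,k),j)
    have hc : (g = k + 0) ↔ (k = g + 0) := by
      constructor <;> intro h <;> rw [h, SigmaAux.addAddSelf]
    unfold sigmaMat'
    simp only
    rcases SigmaAux.zmod2 a with rfl | rfl <;> rcases SigmaAux.zmod2 b with rfl | rfl <;>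
      by_cases hk : k = g <;>
        (try have hk2 : ¬ g = k := fun h => hk h.symm) <;>
        simp [hc, hk, z01, z10, SigmaAux.addAddSelf] <;>
      first
      | rfl
      | simp [hk2]
      | (rw [SigmaAux.Lmat_zero M 0 _ _ g g]
         exact SigmaAux.entrySymmK _ (SigmaAux.Lmat_mem M 0 0 g g) j i)
  have symm1 : ∀ t, (sigmaMat M 1 t)ᵀ = sigmaMat M 1 t ∧
      (sigmaMat' M 1 t)ᵀ = sigmaMat' M 1 t := by
    intro t
    constructor
    · ext ⟨⟨a, g⟩, i⟩ ⟨⟨b, k⟩, j⟩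
      show sigmaMat M 1 t ((b,k),j) ((a,g),i) = sigmaMat M 1 t ((a,g),i) ((b,k),j)
      have hc : (g = k + t) ↔ (k = g + t) := by
        constructor <;> intro h <;> rw [h, SigmaAux.addAddSelf]
      unfold sigmaMat
      simp only
      rcases SigmaAux.zmod2 a with rfl | rfl <;> rcases SigmaAux.zmod2 b with rfl | rfl <;>
        by_cases hk : k = g + t <;>
          simp [hc, hk, z01, z10, z11, SigmaAux.addAddSelf] <;>
        first
        | rfl
        | exact SigmaAux.entrySymm _ (SigmaAux.Lmat_mem M 1 t _ _) j i
    · ext ⟨⟨a, g⟩, i⟩ ⟨⟨b, k⟩, j⟩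
      show sigmaMat' M 1 t ((b,k),j) ((a,g),i) = sigmaMat' M 1 t ((a,g),i) ((b,k),j)
      have hc : (g = k + t) ↔ (k = g + t) := by
        constructor <;> intro h <;> rw [h, SigmaAux.addAddSelf]
      unfold sigmaMat'
      simp only
      rcases SigmaAux.zmod2 a with rfl | rfl <;> rcases SigmaAux.zmod2 b with rfl | rfl <;>
        by_cases hk : k = g + t <;>
          simp [hc, hk, z01, z10, z11, SigmaAux.addAddSelf] <;>
        first
        | rfl
        | exact SigmaAux.entrySymmK _ (SigmaAux.Lmat_mem M 1 t _ _) j i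
  have ent0 : ∀ t p q, sigmaMat M 0 t p q = 0 ∨ sigmaMat M 0 t p q = 1 := by
    intro t p q
    unfold sigmaMat
    split_ifs
    · exact SigmaAux.entry01 _ (SigmaAux.Lmat_mem M 0 t _ _) _ _
    · exact SigmaAux.entry01 _ (SigmaAux.Lmat_mem M 0 t _ _) _ _
    · exact Or.inl rfl
  have ent0' : ∀ p q, sigmaMat' M 0 0 p q = 0 ∨ sigmaMat' M 0 0 p q = 1 := by
    intro p q
    unfold sigmaMat'
    split_ifs
    · exact SigmaAux.entry01K _ (SigmaAux.Lmat_mem M 0 0 _ _) _ _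
    · exact SigmaAux.entry01K _ (SigmaAux.Lmat_mem M 0 0 _ _) _ _
    · exact Or.inl rfl
  have ent1 : ∀ t p q, (sigmaMat M 1 t p q = 0 ∨ sigmaMat M 1 t p q = 1) ∧
      (sigmaMat' M 1 t p q = 0 ∨ sigmaMat' M 1 t p q = 1) := by
    intro t p q
    constructor
    · unfold sigmaMat
      split_ifs
      · exact SigmaAux.entry01 _ (SigmaAux.Lmat_mem M 1 t _ _) _ _
      · exact SigmaAux.entry01 _ (SigmaAux.Lmat_mem M 1 t _ _) _ _
      · exact Or.inl rfl
    · unfold sigmaMat'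
      split_ifs
      · exact SigmaAux.entry01K _ (SigmaAux.Lmat_mem M 1 t _ _) _ _
      · exact SigmaAux.entry01K _ (SigmaAux.Lmat_mem M 1 t _ _) _ _
      · exact Or.inl rfl
  have sum_eq : sigmaMat M 0 0 + sigmaMat' M 0 0
        + ∑ t ∈ Finset.univ.filter (fun t : Fin n → ZMod 2 => t ≠ 0), sigmaMat M 0 t
        + ∑ t : Fin n → ZMod 2, (sigmaMat M 1 t + sigmaMat' M 1 t)
      = fun _ _ => (1:ℝ) := by
    funext p q
    obtain ⟨⟨a, g⟩, i⟩ := p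
    obtain ⟨⟨b, k⟩, j⟩ := q
    simp only [Matrix.add_apply, Matrix.sum_apply]
    rcases SigmaAux.zmod2 a with rfl | rfl <;> rcases SigmaAux.zmod2 b with rfl | rfl
    · -- a = 0, b = 0
      have h1 : sigmaMat M 0 0 ((0,g),i) ((0,k),j)
          = if k = g then (if i = j then (1:ℝ) else 0) else 0 := by
        simp [sigmaMat, Lmat, z01, z10, Matrix.one_apply]
      have h1' : sigmaMat' M 0 0 ((0,g),i) ((0,k),j)
          = if k = g then K2 i j else 0 := by
        simp [sigmaMat', Lmat, z01, z10]
      have hsummand : ∀ t ∈ Finset.univ.filter (fun t : Fin n → ZMod 2 => t ≠ 0),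
          sigmaMat M 0 t ((0,g),i) ((0,k),j) = if t = g + k then (1:ℝ) else 0 := by
        intro t ht
        rw [Finset.mem_filter] at ht
        by_cases htk : t = g + k
        · subst htk
          simp [sigmaMat, Lmat, SigmaAux.addSelf, z01, z10, z11, ht.2]
        · have hk : ¬ k = g + t := fun h => htk ((SigmaAux.eqAdd g k t).mp h)
          simp [sigmaMat, hk, htk, z01, z10]
      have hS2 : ∑ t : Fin n → ZMod 2, (sigmaMat M 1 t ((0,g),i) ((0,k),j)
          + sigmaMat' M 1 t ((0,g),i) ((0,k),j)) = 0 :=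
        Finset.sum_eq_zero (fun t _ => by simp [sigmaMat, sigmaMat', z01, z10])
      rw [h1, h1', Finset.sum_congr rfl hsummand, Finset.sum_ite_eq', hS2, add_zero]
      by_cases hgk : k = g
      · subst hgk
        have h0 : k + k = 0 := SigmaAux.selfAdd k
        simp only [if_pos rfl, h0, Finset.mem_filter, Finset.mem_univ, ne_eq,
          not_true_eq_false, and_false, if_false, add_zero]
        fin_cases i <;> fin_cases j <;> simp [K2]
      · have h0 : ¬ g + k = 0 := fun h => hgk ((SigmaAux.addEqZero g k).mp h).symm
        simp [hgk, h0, Finset.mem_filter]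
    · -- a = 0, b = 1
      have h1 : sigmaMat M 0 0 ((0,g),i) ((1,k),j) = 0 := by
        simp [sigmaMat, z01, z10]
      have h1' : sigmaMat' M 0 0 ((0,g),i) ((1,k),j) = 0 := by
        simp [sigmaMat', z01, z10]
      have hS1 : ∑ t ∈ Finset.univ.filter (fun t : Fin n → ZMod 2 => t ≠ 0),
          sigmaMat M 0 t ((0,g),i) ((1,k),j) = 0 :=
        Finset.sum_eq_zero (fun t _ => by simp [sigmaMat, z01, z10])
      have hsummand : ∀ t : Fin n → ZMod 2,
          sigmaMat M 1 t ((0,g),i) ((1,k),j) + sigmaMat' M 1 t ((0,g),i) ((1,k),j)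
          = if t = g + k then (1:ℝ) else 0 := by
        intro t
        by_cases htk : t = g + k
        · subst htk
          simp only [if_pos rfl]
          simp [sigmaMat, sigmaMat', SigmaAux.addSelf, z01, z10, z11]
          exact SigmaAux.addJ _ (SigmaAux.Lmat_one M (g + k) g k) i j
        · have hk : ¬ k = g + t := fun h => htk ((SigmaAux.eqAdd g k t).mp h)
          simp [sigmaMat, sigmaMat', hk, htk, z01, z10]
      rw [h1, h1', hS1, Finset.sum_congr rfl (fun t _ => hsummand t),
        Finset.sum_ite_eq']
      simp
    · -- a = 1, b = 0
      have h1 : sigmaMat M 0 0 ((1,g),i) ((0,k),j) = 0 := by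
        simp [sigmaMat, z01, z10]
      have h1' : sigmaMat' M 0 0 ((1,g),i) ((0,k),j) = 0 := by
        simp [sigmaMat', z01, z10]
      have hS1 : ∑ t ∈ Finset.univ.filter (fun t : Fin n → ZMod 2 => t ≠ 0),
          sigmaMat M 0 t ((1,g),i) ((0,k),j) = 0 :=
        Finset.sum_eq_zero (fun t _ => by simp [sigmaMat, z01, z10])
      have hsummand : ∀ t : Fin n → ZMod 2,
          sigmaMat M 1 t ((1,g),i) ((0,k),j) + sigmaMat' M 1 t ((1,g),i) ((0,k),j)
          = if t = g + k then (1:ℝ) else 0 := by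
        intro t
        by_cases htk : t = g + k
        · subst htk
          simp only [if_pos rfl]
          simp [sigmaMat, sigmaMat', SigmaAux.addSelf, z01, z10, z11]
          exact SigmaAux.addJ _ (SigmaAux.Lmat_one M (g + k) k g) i j
        · have hk : ¬ k = g + t := fun h => htk ((SigmaAux.eqAdd g k t).mp h)
          simp [sigmaMat, sigmaMat', hk, htk, z01, z10]
      rw [h1, h1', hS1, Finset.sum_congr rfl (fun t _ => hsummand t),
        Finset.sum_ite_eq']
      simp
    · -- a = 1, b = 1
      have h1 : sigmaMat M 0 0 ((1,g),i) ((1,k),j)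
          = if k = g then (if i = j then (1:ℝ) else 0) else 0 := by
        simp [sigmaMat, Lmat, z01, z10, Matrix.one_apply]
      have h1' : sigmaMat' M 0 0 ((1,g),i) ((1,k),j)
          = if k = g then K2 i j else 0 := by
        simp [sigmaMat', Lmat, z01, z10]
      have hsummand : ∀ t ∈ Finset.univ.filter (fun t : Fin n → ZMod 2 => t ≠ 0),
          sigmaMat M 0 t ((1,g),i) ((1,k),j) = if t = g + k then (1:ℝ) else 0 := by
        intro t ht
        rw [Finset.mem_filter] at ht
        by_cases htk : t = g + k
        · subst htk
          simp [sigmaMat, Lmat, SigmaAux.addSelf, z01, z10, z11, ht.2]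
        · have hk : ¬ k = g + t := fun h => htk ((SigmaAux.eqAdd g k t).mp h)
          simp [sigmaMat, hk, htk, z01, z10]
      have hS2 : ∑ t : Fin n → ZMod 2, (sigmaMat M 1 t ((1,g),i) ((1,k),j)
          + sigmaMat' M 1 t ((1,g),i) ((1,k),j)) = 0 :=
        Finset.sum_eq_zero (fun t _ => by simp [sigmaMat, sigmaMat', z01, z10, z11])
      rw [h1, h1', Finset.sum_congr rfl hsummand, Finset.sum_ite_eq', hS2, add_zero]
      by_cases hgk : k = g
      · subst hgk
        have h0 : k + k = 0 := SigmaAux.selfAdd k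
        simp only [if_pos rfl, h0, Finset.mem_filter, Finset.mem_univ, ne_eq,
          not_true_eq_false, and_false, if_false, add_zero]
        fin_cases i <;> fin_cases j <;> simp [K2]
      · have h0 : ¬ g + k = 0 := fun h => hgk ((SigmaAux.addEqZero g k).mp h).symm
        simp [hgk, h0, Finset.mem_filter]
  exact ⟨part1, symm0, symm0', symm1, ent0, ent0', ent1, sum_eq⟩
end
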